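/- arXiv:2008.10466 — 5 statements merged into one kernel-verified Lean document; each statement's English description precedes it below -/
import Mathlib

section
/- Let g(Z) = ‖Z‖_{2,0} for Z ∈ ℝ^{n×r}. Then for every U, Γ ∈ ℝ^{n×r}, the subderivative dg(U)(Γ) = 0 if every nonzero column index of Γ is a nonzero column index of U (i.e. J_Γ ⊆ J_U), and dg(U)(Γ) = +∞ otherwise. -/
/-!
Nonzero columns stay nonzero under small perturbations, so `g` is locally nondecreasing at `U`
and the difference quotients of the subderivative are eventually nonnegative. If `J_Γ ⊆ J_U`,
the ray `U + tΓ` creates no new nonzero column, so the quotients vanish along it. Otherwise a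
column `j ∈ J_Γ \ J_U` is nonzero in `U + tW` for all `(t, W)` near `(0⁺, Γ)`, so `g` jumps by
at least one and the quotients are at least `1 / t → ∞`.
-/

open Filter Topology

/-- The column `ℓ_{2,0}`-norm: the number of nonzero columns. -/
noncomputable def l20 {α β : Type*} [Fintype α] [Fintype β] (A : Matrix α β ℝ) : ℕ :=
  {j : β | (fun i => A i j) ≠ 0}.ncard

/-- The subderivative `dh(x)(w) = liminf_{t↓0, w'→w} (h(x + t w') − h(x))/t`,
valued in `[−∞, +∞]`. -/
noncomputable def subderiv {E : Type*} [AddCommGroup E] [Module ℝ E] [TopologicalSpace E]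
    (h : E → ℝ) (x w : E) : EReal :=
  Filter.liminf (fun p : ℝ × E => (((h (x + p.1 • p.2) - h x) / p.1 : ℝ) : EReal))
    ((𝓝[>] (0 : ℝ)) ×ˢ 𝓝 w)

section Subderivative

variable {E : Type*} [AddCommGroup E] [Module ℝ E] [TopologicalSpace E]

lemma tendsto_add_smul_nhdsGT_prod [ContinuousAdd E] [ContinuousSMul ℝ E] (x w : E) :
    Tendsto (fun p : ℝ × E => x + p.1 • p.2) ((𝓝[>] (0 : ℝ)) ×ˢ 𝓝 w) (𝓝 x) := by
  have hcont : Continuous (fun p : ℝ × E => x + p.1 • p.2) := by fun_prop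
  have h := hcont.tendsto ((0 : ℝ), w)
  rw [zero_smul, add_zero, nhds_prod_eq] at h
  exact h.mono_left (Filter.prod_mono nhdsWithin_le_nhds le_rfl)

lemma subderiv_nonneg_of_eventually_le [ContinuousAdd E] [ContinuousSMul ℝ E]
    {h : E → ℝ} {x : E} (w : E) (hx : ∀ᶠ y in 𝓝 x, h x ≤ h y) : 0 ≤ subderiv h x w := by
  refine Filter.le_liminf_of_le (by isBoundedDefault) ?_
  filter_upwards [(tendsto_add_smul_nhdsGT_prod x w).eventually hx,
    tendsto_fst.eventually self_mem_nhdsWithin] with p hle (hpos : 0 < p.1)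
  exact EReal.coe_nonneg.2 (div_nonneg (sub_nonneg.2 hle) hpos.le)

lemma subderiv_nonpos_of_eventually_le {h : E → ℝ} {x w : E}
    (hw : ∀ᶠ t in 𝓝[>] (0 : ℝ), h (x + t • w) ≤ h x) : subderiv h x w ≤ 0 := by
  refine Filter.liminf_le_of_frequently_le' ?_
  have hray : Tendsto (fun t : ℝ => (t, w)) (𝓝[>] 0) ((𝓝[>] (0 : ℝ)) ×ˢ 𝓝 w) :=
    tendsto_id.prodMk tendsto_const_nhds
  refine hray.frequently (Filter.Eventually.frequently ?_)
  filter_upwards [hw, self_mem_nhdsWithin] with t hle (htpos : 0 < t)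
  exact EReal.coe_nonpos.2 (div_nonpos_of_nonpos_of_nonneg (sub_nonpos.2 hle) htpos.le)

lemma subderiv_eq_top_of_eventually_add_le {h : E → ℝ} {x w : E} {c : ℝ} (hc : 0 < c)
    (hjump : ∀ᶠ p in (𝓝[>] (0 : ℝ)) ×ˢ 𝓝 w, h x + c ≤ h (x + p.1 • p.2)) :
    subderiv h x w = ⊤ := by
  have hquot : Tendsto (fun p : ℝ × E => ((c * p.1⁻¹ : ℝ) : EReal))
      ((𝓝[>] (0 : ℝ)) ×ˢ 𝓝 w) (𝓝 ⊤) :=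
    EReal.tendsto_coe_atTop.comp ((tendsto_inv_nhdsGT_zero.const_mul_atTop hc).comp tendsto_fst)
  refine eq_top_iff.2 (hquot.liminf_eq.symm.le.trans (Filter.liminf_le_liminf ?_))
  filter_upwards [hjump, tendsto_fst.eventually self_mem_nhdsWithin] with p hle (hpos : 0 < p.1)
  rw [EReal.coe_le_coe_iff, ← div_eq_mul_inv]
  exact div_le_div_of_nonneg_right (by linarith) hpos.le

end Subderivative

section ColumnSupport

variable {α β : Type*}

/-- The index set `J_A` of nonzero columns of `A`. -/
def colSupport (A : Matrix α β ℝ) : Set β := {j | (fun i => A i j) ≠ 0}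

lemma colSupport_add_smul_subset (A B : Matrix α β ℝ) (t : ℝ) :
    colSupport (A + t • B) ⊆ colSupport A ∪ colSupport B := by
  intro j hj
  by_contra hAB
  rw [Set.mem_union, not_or] at hAB
  obtain ⟨hA, hB⟩ := hAB
  exact hj (funext fun i => by simp [congrFun (not_not.1 hA) i, congrFun (not_not.1 hB) i])

lemma mem_colSupport_add_smul {A B : Matrix α β ℝ} {t : ℝ} {j : β} (hA : j ∉ colSupport A)
    (ht : t ≠ 0) (hB : j ∈ colSupport B) : j ∈ colSupport (A + t • B) := by
  intro hcol
  refine hB (funext fun i => ?_)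
  have hAi : A i j = 0 := congrFun (not_not.1 hA) i
  simpa [hAi, ht] using congrFun hcol i

lemma isOpen_setOf_mem_colSupport (j : β) : IsOpen {Z : Matrix α β ℝ | j ∈ colSupport Z} :=
  isOpen_compl_singleton.preimage (by fun_prop : Continuous fun (Z : Matrix α β ℝ) i => Z i j)

lemma eventually_colSupport_subset [Finite β] (A : Matrix α β ℝ) :
    ∀ᶠ Z in 𝓝 A, colSupport A ⊆ colSupport Z :=
  (eventually_all_finite (Set.toFinite _)).2 fun j hj =>
    (isOpen_setOf_mem_colSupport j).mem_nhds hj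

variable [Fintype α] [Fintype β]

lemma l20_le_of_colSupport_subset {A B : Matrix α β ℝ} (h : colSupport A ⊆ colSupport B) :
    l20 A ≤ l20 B :=
  Set.ncard_le_ncard h (Set.toFinite _)

lemma eventually_l20_le (A : Matrix α β ℝ) : ∀ᶠ Z in 𝓝 A, l20 A ≤ l20 Z :=
  (eventually_colSupport_subset A).mono fun _ => l20_le_of_colSupport_subset

lemma l20_add_smul_le {A B : Matrix α β ℝ} (hBA : colSupport B ⊆ colSupport A) (t : ℝ) :
    l20 (A + t • B) ≤ l20 A :=
  l20_le_of_colSupport_subset <|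
    (colSupport_add_smul_subset A B t).trans (Set.union_subset le_rfl hBA)

lemma eventually_l20_add_smul_ge {A B : Matrix α β ℝ} {j : β} (hjB : j ∈ colSupport B)
    (hjA : j ∉ colSupport A) :
    ∀ᶠ p in (𝓝[>] (0 : ℝ)) ×ˢ 𝓝 B, l20 A + 1 ≤ l20 (A + p.1 • p.2) := by
  filter_upwards [(tendsto_add_smul_nhdsGT_prod A B).eventually (eventually_colSupport_subset A),
    tendsto_fst.eventually self_mem_nhdsWithin,
    tendsto_snd.eventually ((isOpen_setOf_mem_colSupport j).mem_nhds hjB)]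
    with p hsupp (hpos : 0 < p.1) (hjp : j ∈ colSupport p.2)
  have hins : insert j (colSupport A) ⊆ colSupport (A + p.1 • p.2) :=
    Set.insert_subset (mem_colSupport_add_smul hjA hpos.ne' hjp) hsupp
  calc l20 A + 1 = (insert j (colSupport A)).ncard := (Set.ncard_insert_of_notMem hjA).symm
    _ ≤ l20 (A + p.1 • p.2) := Set.ncard_le_ncard hins (Set.toFinite _)

end ColumnSupport

/-- for `g(Z) = ‖Z‖_{2,0}`, `dg(U)(Γ) = 0` if `J_Γ ⊆ J_U`, and
`dg(U)(Γ) = +∞` otherwise. -/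
theorem subderiv_l20 {n r : ℕ} (U Γ : Matrix (Fin n) (Fin r) ℝ) :
    ((∀ i : Fin r, (fun k => Γ k i) ≠ 0 → (fun k => U k i) ≠ 0) →
        subderiv (fun Z => (l20 Z : ℝ)) U Γ = 0) ∧
      (¬ (∀ i : Fin r, (fun k => Γ k i) ≠ 0 → (fun k => U k i) ≠ 0) →
        subderiv (fun Z => (l20 Z : ℝ)) U Γ = ⊤) := by
  refine ⟨fun hΓU => le_antisymm ?_ ?_, fun hΓU => ?_⟩
  · exact subderiv_nonpos_of_eventually_le <| Eventually.of_forall fun t =>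
      Nat.cast_le.2 (l20_add_smul_le hΓU t)
  · exact subderiv_nonneg_of_eventually_le Γ <| (eventually_l20_le U).mono fun _ => Nat.cast_le.2
  · obtain ⟨j, hjΓ, hjU⟩ := Set.not_subset.1 (hΓU : ¬ colSupport Γ ⊆ colSupport U)
    refine subderiv_eq_top_of_eventually_add_le one_pos ?_
    exact (eventually_l20_add_smul_ge hjΓ hjU).mono fun _ h => by exact_mod_cast h
end

section
/- Let f : ℝ^{n×m} → ℝ be continuously differentiable and μ > 0. Suppose (Ū, V̄) ∈ ℝ^{n×r} × ℝ^{m×r} satisfies ∇f(Ū V̄ᵀ) V̄_j + μ Ū_j = 0 for every column index j with Ū_j ≠ 0, and (∇f(Ū V̄ᵀ))ᵀ Ū_j + μ V̄_j = 0 for every column index j with V̄_j ≠ 0. Then the sets of nonzero column indices of Ū and of V̄ coincide (J_Ū = J_V̄), and moreover Ūᵀ Ū = V̄ᵀ V̄. -/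
open Filter Topology Matrix

attribute [local instance] Matrix.frobeniusSeminormedAddCommGroup
  Matrix.frobeniusNormedAddCommGroup Matrix.frobeniusNormedSpace

/-- The Frobenius (trace) inner product `⟨A,B⟩ = trace(AᵀB) = ∑ᵢⱼ Aᵢⱼ Bᵢⱼ` on matrices. -/
noncomputable def frobInner {α β : Type*} [Fintype α] [Fintype β] (A B : Matrix α β ℝ) : ℝ :=
  ∑ i, ∑ j, A i j * B i j

/-!
Read column by column, the two conditions say `μ Ū_j = -G V̄_j` and `μ V̄_j = -Gᵀ Ū_j` with
`G = ∇f(ŪV̄ᵀ)`, each imposed only on the nonzero columns. A zero column of `V̄` makes the right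
side of the first identity vanish, so (as `μ ≠ 0`) the matching column of `Ū` vanishes too, and
symmetrically. Hence both identities hold for every column, i.e. `μ Ū = -G V̄` and `μ V̄ = -Gᵀ Ū`,
and then `μ ŪᵀŪ = -ŪᵀGV̄ = μ V̄ᵀV̄`.
-/

namespace Matrix

variable {K α β ι : Type*} [Field K] [Fintype β]

def IsColumnStationary (G : Matrix α β K) (μ : K) (U : Matrix α ι K) (V : Matrix β ι K) :
    Prop :=
  ∀ j, (fun i => U i j) ≠ 0 → ∀ i, (G * V) i j + μ * U i j = 0

theorem mul_apply_eq_zero_of_col_eq_zero {A : Matrix α β K} {B : Matrix β ι K} {j : ι}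
    (hB : (fun k => B k j) = 0) (i : α) : (A * B) i j = 0 := by
  simp [mul_apply, congrFun hB]

namespace IsColumnStationary

variable {G : Matrix α β K} {μ : K} {U : Matrix α ι K} {V : Matrix β ι K}

theorem col_eq_zero (h : IsColumnStationary G μ U V) (hμ : μ ≠ 0) {j : ι}
    (hV : (fun k => V k j) = 0) : (fun i => U i j) = 0 := by
  by_contra hU
  refine hU (funext fun i => ?_)
  have hi := h j hU i
  rw [mul_apply_eq_zero_of_col_eq_zero hV, zero_add] at hi
  exact (mul_eq_zero.mp hi).resolve_left hμ

theorem smul_eq_neg_mul (h : IsColumnStationary G μ U V)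
    (hUV : ∀ j, (fun i => U i j) = 0 → (fun k => V k j) = 0) : μ • U = -(G * V) := by
  ext i j
  rw [smul_apply, neg_apply, smul_eq_mul]
  by_cases hU : (fun i => U i j) = 0
  · rw [congrFun hU i, mul_apply_eq_zero_of_col_eq_zero (hUV j hU)]
    simp
  · linear_combination h j hU i

end IsColumnStationary

theorem transpose_mul_self_eq_of_smul_eq [Fintype α] [Fintype ι] {G : Matrix α β K} {μ : K}
    (hμ : μ ≠ 0) {U : Matrix α ι K} {V : Matrix β ι K}
    (hU : μ • U = -(G * V)) (hV : μ • V = -(Gᵀ * U)) : Uᵀ * U = Vᵀ * V := by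
  refine smul_right_injective _ hμ ?_
  calc μ • (Uᵀ * U) = Uᵀ * (μ • U) := (Matrix.mul_smul Uᵀ μ U).symm
    _ = -(Uᵀ * G * V) := by rw [hU, Matrix.mul_neg, Matrix.mul_assoc]
    _ = (μ • V)ᵀ * V := by rw [hV, transpose_neg, transpose_mul, transpose_transpose,
        Matrix.neg_mul]
    _ = μ • (Vᵀ * V) := by rw [transpose_smul, Matrix.smul_mul]

end Matrix

theorem critical_point_structure_general {n m r : ℕ}
    (f' : Matrix (Fin n) (Fin m) ℝ → Matrix (Fin n) (Fin m) ℝ)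
    (mu : ℝ) (hmu : 0 < mu)
    (Ubar : Matrix (Fin n) (Fin r) ℝ) (Vbar : Matrix (Fin m) (Fin r) ℝ)
    (hU : ∀ j : Fin r, (fun i => Ubar i j) ≠ 0 →
      ∀ i, (f' (Ubar * Vbarᵀ) * Vbar) i j + mu * Ubar i j = 0)
    (hV : ∀ j : Fin r, (fun i => Vbar i j) ≠ 0 →
      ∀ i, ((f' (Ubar * Vbarᵀ))ᵀ * Ubar) i j + mu * Vbar i j = 0) :
    (∀ j : Fin r, (fun i => Ubar i j) ≠ 0 ↔ (fun i => Vbar i j) ≠ 0) ∧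
      Ubarᵀ * Ubar = Vbarᵀ * Vbar := by
  have hU : IsColumnStationary (f' (Ubar * Vbarᵀ)) mu Ubar Vbar := hU
  have hV : IsColumnStationary (f' (Ubar * Vbarᵀ))ᵀ mu Vbar Ubar := hV
  have hsupp : ∀ j : Fin r, (fun i => Ubar i j) = 0 ↔ (fun i => Vbar i j) = 0 := fun _ =>
    ⟨hV.col_eq_zero hmu.ne', hU.col_eq_zero hmu.ne'⟩
  refine ⟨fun j => (hsupp j).not, ?_⟩
  exact transpose_mul_self_eq_of_smul_eq hmu.ne'
    (hU.smul_eq_neg_mul fun j => (hsupp j).mp) (hV.smul_eq_neg_mul fun j => (hsupp j).mpr)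

/-- if `(Ū,V̄)` satisfies the criticality conditions
`∇f(ŪV̄ᵀ)V̄_j + μŪ_j = 0` for every nonzero column `j` of `Ū` and
`(∇f(ŪV̄ᵀ))ᵀŪ_j + μV̄_j = 0` for every nonzero column `j` of `V̄`,
then `J_Ū = J_V̄` and `ŪᵀŪ = V̄ᵀV̄`. -/
theorem critical_point_structure {n m r : ℕ}
    (f : Matrix (Fin n) (Fin m) ℝ → ℝ) (f' : Matrix (Fin n) (Fin m) ℝ → Matrix (Fin n) (Fin m) ℝ)
    (hdiff : Differentiable ℝ f)
    (hgrad : ∀ X H, fderiv ℝ f X H = frobInner (f' X) H)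
    (hcont : Continuous f')
    (mu : ℝ) (hmu : 0 < mu)
    (Ubar : Matrix (Fin n) (Fin r) ℝ) (Vbar : Matrix (Fin m) (Fin r) ℝ)
    (hU : ∀ j : Fin r, (fun i => Ubar i j) ≠ 0 →
      ∀ i, (f' (Ubar * Vbarᵀ) * Vbar) i j + mu * Ubar i j = 0)
    (hV : ∀ j : Fin r, (fun i => Vbar i j) ≠ 0 →
      ∀ i, ((f' (Ubar * Vbarᵀ))ᵀ * Ubar) i j + mu * Vbar i j = 0) :
    (∀ j : Fin r, (fun i => Ubar i j) ≠ 0 ↔ (fun i => Vbar i j) ≠ 0) ∧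
      Ubarᵀ * Ubar = Vbarᵀ * Vbar :=
  critical_point_structure_general f' mu hmu Ubar Vbar hU hV
end

section
/- Let X ∈ ℝ^{n×m} with rank(X) ≤ r. Then rank(X) = min { (1/2)(‖U‖_{2,0} + ‖V‖_{2,0}) : U ∈ ℝ^{n×r}, V ∈ ℝ^{m×r}, X = UVᵀ }. In particular: (a) for every U ∈ ℝ^{n×r} and V ∈ ℝ^{m×r} with X = UVᵀ, one has 2·rank(X) ≤ ‖U‖_{2,0} + ‖V‖_{2,0}; and (b) there exist U ∈ ℝ^{n×r}, V ∈ ℝ^{m×r} with X = UVᵀ and ‖U‖_{2,0} = ‖V‖_{2,0} = rank(X). -/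
/-! A factorization `X = U * Vᵀ` factors through the nonzero columns of `U`, so
`rank X ≤ ‖U‖_{2,0}`; applied to `Xᵀ = V * Uᵀ` it gives `rank X ≤ ‖V‖_{2,0}`. Conversely, a rank
factorization of `X` through `rank X ≤ r` coordinates, padded with zero columns, has at most
`rank X` nonzero columns in each factor, and the lower bound forces equality. -/

open Filter Topology Matrix

theorem Matrix.exists_rank_factorization {α β K : Type*} [Fintype β] [Field K] (X : Matrix α β K) :
    ∃ (A : Matrix α (Fin X.rank) K) (B : Matrix (Fin X.rank) β K), X = A * B := by
  classical
  set W := LinearMap.range X.mulVecLin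
  let b := (Module.finBasis K W).equivFun
  have hX : X.mulVecLin =
      (W.subtype ∘ₗ b.symm.toLinearMap) ∘ₗ (b.toLinearMap ∘ₗ X.mulVecLin.rangeRestrict) := by
    ext; simp [b, W]
  change ∃ (A : Matrix α (Fin (Module.finrank K W)) K) (B : Matrix (Fin (Module.finrank K W)) β K),
    X = A * B
  exact ⟨LinearMap.toMatrix' (W.subtype ∘ₗ b.symm.toLinearMap),
    LinearMap.toMatrix' (b.toLinearMap ∘ₗ X.mulVecLin.rangeRestrict),
    by rw [← LinearMap.toMatrix'_comp, ← hX, ← Matrix.toLin'_apply', LinearMap.toMatrix'_toLin']⟩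

variable {α β ι κ : Type*} [Fintype α] [Fintype β] [Fintype ι] [Fintype κ]

theorem rank_le_l20 (A : Matrix α β ℝ) : A.rank ≤ l20 A := by
  classical
  rw [← rank_transpose, l20, Set.ncard_eq_toFinset_card']
  exact Aᵀ.rank_le_card_of_support_subset _ fun j hj => by simpa [funext_iff] using hj

theorem two_mul_rank_le_l20_add_l20 {X : Matrix α β ℝ} {U : Matrix α ι ℝ} {V : Matrix β ι ℝ}
    (h : X = U * Vᵀ) : 2 * X.rank ≤ l20 U + l20 V := by
  have hU : X.rank ≤ l20 U := h ▸ (rank_mul_le_left _ _).trans (rank_le_l20 U)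
  have hV : X.rank ≤ l20 V := by
    rw [← rank_transpose, h, transpose_mul, transpose_transpose]
    exact (rank_mul_le_left _ _).trans (rank_le_l20 V)
  omega

theorem l20_le_card_of_col_eq_zero (A : Matrix α β ℝ) (s : Finset β)
    (hs : ∀ j ∉ s, ∀ i, A i j = 0) : l20 A ≤ s.card := by
  rw [l20, ← Set.ncard_coe_finset]
  refine Set.ncard_le_ncard (fun j hj => ?_) s.finite_toSet
  by_contra hjs
  exact hj (funext (hs j hjs))

theorem l20_mul_submatrix_one_le [DecidableEq ι] (A : Matrix α κ ℝ) (e : κ ↪ ι) :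
    l20 (A * (1 : Matrix ι ι ℝ).submatrix e id) ≤ Fintype.card κ := by
  rw [← Finset.card_univ, ← Finset.card_map e]
  refine l20_le_card_of_col_eq_zero _ _ fun j hj i => Finset.sum_eq_zero fun c _ => ?_
  have : e c ≠ j := fun hc => hj (Finset.mem_map.2 ⟨c, Finset.mem_univ c, hc⟩)
  exact mul_eq_zero_of_right _ (one_apply_ne this)

theorem exists_eq_mul_transpose_l20_le (X : Matrix α β ℝ) (e : Fin X.rank ↪ ι) :
    ∃ (U : Matrix α ι ℝ) (V : Matrix β ι ℝ), X = U * Vᵀ ∧ l20 U ≤ X.rank ∧ l20 V ≤ X.rank := by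
  classical
  obtain ⟨A, B, hAB⟩ := X.exists_rank_factorization
  let E : Matrix (Fin X.rank) ι ℝ := (1 : Matrix ι ι ℝ).submatrix e id
  have hE : E * Eᵀ = 1 := by
    rw [transpose_submatrix, transpose_one, ← submatrix_mul _ _ _ id _ Function.bijective_id,
      Matrix.one_mul, submatrix_one_embedding]
  refine ⟨A * E, Bᵀ * E, ?_, ?_, ?_⟩
  · rw [transpose_mul, transpose_transpose, Matrix.mul_assoc, ← Matrix.mul_assoc E, hE,
      Matrix.one_mul]
    exact hAB
  · simpa using l20_mul_submatrix_one_le A e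
  · simpa using l20_mul_submatrix_one_le Bᵀ e

/-- for `X ∈ ℝ^{n×m}` with `rank(X) ≤ r`,
`rank(X) = min{(1/2)(‖U‖_{2,0} + ‖V‖_{2,0}) : X = UVᵀ}`. In particular:
(a) `2·rank(X) ≤ ‖U‖_{2,0} + ‖V‖_{2,0}` whenever `X = UVᵀ`; and
(b) there is a factorization `X = UVᵀ` with `‖U‖_{2,0} = ‖V‖_{2,0} = rank(X)`. -/
theorem rank_eq_min_l20 {n m r : ℕ} (X : Matrix (Fin n) (Fin m) ℝ) (hX : X.rank ≤ r) :
    (∀ (U : Matrix (Fin n) (Fin r) ℝ) (V : Matrix (Fin m) (Fin r) ℝ),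
        X = U * Vᵀ → 2 * X.rank ≤ l20 U + l20 V) ∧
      (∃ (U : Matrix (Fin n) (Fin r) ℝ) (V : Matrix (Fin m) (Fin r) ℝ),
        X = U * Vᵀ ∧ l20 U = X.rank ∧ l20 V = X.rank) := by
  refine ⟨fun U V h => two_mul_rank_le_l20_add_l20 h, ?_⟩
  obtain ⟨U, V, hUV, hU, hV⟩ := exists_eq_mul_transpose_l20_le X (Fin.castLEEmb hX)
  have := two_mul_rank_le_l20_add_l20 hUV
  exact ⟨U, V, hUV, by omega, by omega⟩
end

section
/- Fix g ∈ ℝ^n, c > 0 and λ > 0, and consider the function ψ(u) = (c/2)‖u − g‖² + λ·sign(‖u‖) on ℝ^n (where sign(‖u‖) = 0 if u = 0 and 1 otherwise). Then the set of global minimizers of ψ is: {g} if ‖g‖ > √(2λ/c); {0} if ‖g‖ < √(2λ/c); and {0, g} if ‖g‖ = √(2λ/c). -/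
/-!
Off the origin `ψ(u) = (c/2)‖u − g‖² + λ ≥ λ`, with equality only at `u = g`, while `ψ(0) = (c/2)‖g‖²`.
So the minimum of `ψ` is `min((c/2)‖g‖², λ)`, attained at `0` when `(c/2)‖g‖² ≤ λ` and at `g` when
`λ ≤ (c/2)‖g‖²`; and `(c/2)‖g‖² ≤ λ` says exactly `‖g‖ ≤ √(2λ/c)`.
-/

open Filter Topology
open scoped Classical

/-- `ψ(u) = (c/2)‖u − g‖² + λ·sign(‖u‖)`, where `sign(‖u‖) = 0` if `u = 0` and `1` otherwise. -/
noncomputable def psi {n : ℕ} (g : EuclideanSpace ℝ (Fin n)) (c lam : ℝ)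
    (u : EuclideanSpace ℝ (Fin n)) : ℝ :=
  c / 2 * ‖u - g‖ ^ 2 + lam * (if u = 0 then 0 else 1)

section Psi

variable {n : ℕ} {g u : EuclideanSpace ℝ (Fin n)} {c lam : ℝ}

theorem psi_zero : psi g c lam 0 = c / 2 * ‖g‖ ^ 2 := by
  simp [psi]

theorem psi_of_ne_zero (hu : u ≠ 0) : psi g c lam u = c / 2 * ‖u - g‖ ^ 2 + lam := by
  simp [psi, hu]

theorem psi_self_le (hlam : 0 ≤ lam) : psi g c lam g ≤ lam := by
  by_cases hg : g = 0 <;> simp [psi, hg, hlam]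

theorem lam_le_psi_of_ne_zero (hc : 0 ≤ c) (hu : u ≠ 0) : lam ≤ psi g c lam u := by
  rw [psi_of_ne_zero hu]
  have : 0 ≤ c / 2 * ‖u - g‖ ^ 2 := by positivity
  linarith

theorem min_le_psi (hc : 0 ≤ c) : min (c / 2 * ‖g‖ ^ 2) lam ≤ psi g c lam u := by
  by_cases hu : u = 0
  · rw [hu, psi_zero]
    exact min_le_left _ _
  · exact (min_le_right _ _).trans (lam_le_psi_of_ne_zero hc hu)

theorem eq_of_psi_le_lam (hc : 0 < c) (hu : u ≠ 0) (h : psi g c lam u ≤ lam) : u = g := by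
  rw [psi_of_ne_zero hu] at h
  have : c / 2 * ‖u - g‖ ^ 2 = 0 := le_antisymm (by linarith) (by positivity)
  simpa [hc.ne', sub_eq_zero] using this

theorem forall_psi_le_iff (hc : 0 < c) (hlam : 0 ≤ lam) :
    (∀ u', psi g c lam u ≤ psi g c lam u') ↔
      (u = 0 ∧ c / 2 * ‖g‖ ^ 2 ≤ lam) ∨ (u = g ∧ lam ≤ c / 2 * ‖g‖ ^ 2) := by
  constructor
  · intro hmin
    by_cases hu : u = 0
    · subst hu
      exact .inl ⟨rfl, psi_zero.symm.trans_le ((hmin g).trans (psi_self_le hlam))⟩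
    · have hug : u = g := eq_of_psi_le_lam hc hu ((hmin g).trans (psi_self_le hlam))
      exact .inr ⟨hug, (lam_le_psi_of_ne_zero hc.le hu).trans ((hmin 0).trans_eq psi_zero)⟩
  · rintro (⟨rfl, h⟩ | ⟨rfl, h⟩) u'
    · rw [psi_zero, ← min_eq_left h]
      exact min_le_psi hc.le
    · calc psi u c lam u ≤ lam := psi_self_le hlam
        _ = min (c / 2 * ‖u‖ ^ 2) lam := (min_eq_right h).symm
        _ ≤ psi u c lam u' := min_le_psi hc.le

end Psi

theorem half_mul_sq_le_iff_le_sqrt {c lam r : ℝ} (hc : 0 < c) (hlam : 0 ≤ lam) (hr : 0 ≤ r) :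
    c / 2 * r ^ 2 ≤ lam ↔ r ≤ Real.sqrt (2 * lam / c) := by
  rw [Real.le_sqrt hr (by positivity), le_div_iff₀ hc]
  constructor <;> intro h <;> linarith

theorem le_half_mul_sq_iff_sqrt_le {c lam r : ℝ} (hc : 0 < c) (hr : 0 ≤ r) :
    lam ≤ c / 2 * r ^ 2 ↔ Real.sqrt (2 * lam / c) ≤ r := by
  rw [Real.sqrt_le_left hr, div_le_iff₀ hc]
  constructor <;> intro h <;> linarith

/-- the set of global minimizers of `ψ` is `{g}` if `‖g‖ > √(2λ/c)`,
`{0}` if `‖g‖ < √(2λ/c)`, and `{0, g}` if `‖g‖ = √(2λ/c)`. -/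
theorem minimizers_of_scalar_prox {n : ℕ} (g : EuclideanSpace ℝ (Fin n)) (c lam : ℝ)
    (hc : 0 < c) (hlam : 0 < lam) :
    (‖g‖ > Real.sqrt (2 * lam / c) →
      {u : EuclideanSpace ℝ (Fin n) | ∀ u', psi g c lam u ≤ psi g c lam u'} = {g}) ∧
    (‖g‖ < Real.sqrt (2 * lam / c) →
      {u : EuclideanSpace ℝ (Fin n) | ∀ u', psi g c lam u ≤ psi g c lam u'} = {0}) ∧
    (‖g‖ = Real.sqrt (2 * lam / c) →
      {u : EuclideanSpace ℝ (Fin n) | ∀ u', psi g c lam u ≤ psi g c lam u'} = {0, g}) := by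
  have below := half_mul_sq_le_iff_le_sqrt hc hlam.le (norm_nonneg g)
  have above := le_half_mul_sq_iff_sqrt_le (lam := lam) hc (norm_nonneg g)
  simp only [forall_psi_le_iff hc hlam.le]
  refine ⟨fun h => ?_, fun h => ?_, fun h => ?_⟩
  · have hgt : lam < c / 2 * ‖g‖ ^ 2 := lt_of_not_ge (below.not.mpr h.not_ge)
    simp [hgt.not_ge, hgt.le]
  · have hlt : c / 2 * ‖g‖ ^ 2 < lam := lt_of_not_ge (above.not.mpr h.not_ge)
    simp [hlt.not_ge, hlt.le]
  · have heq : c / 2 * ‖g‖ ^ 2 = lam := le_antisymm (below.mpr h.le) (above.mpr h.ge)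
    ext u
    simp [heq]
end

section
/- Let f : ℝ^{n×m} → ℝ be differentiable with ∇f Lipschitz continuous with modulus L_f (Frobenius norm), and let λ > 0, μ ≥ 0. Fix V ∈ ℝ^{m×r} and set τ = L_f‖V‖² (spectral norm of V). Let Ũ ∈ ℝ^{n×r}, let γ > τ, and suppose U⁺ is a global minimizer over ℝ^{n×r} of U ↦ ⟨∇f(ŨVᵀ)V, U⟩ + (γ/2)‖U − Ũ‖_F² + (μ/2)‖U‖_F² + λ‖U‖_{2,0}. Then for every U ∈ ℝ^{n×r}: f(U⁺Vᵀ) + (μ/2)‖U⁺‖_F² + λ‖U⁺‖_{2,0} + ((γ − τ)/2)‖U⁺ − Ũ‖_F² ≤ f(UVᵀ) + (μ/2)‖U‖_F² + λ‖U‖_{2,0} + ((γ + τ)/2)‖U − Ũ‖_F². -/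
open Filter Topology Matrix

attribute [local instance] Matrix.frobeniusSeminormedAddCommGroup
  Matrix.frobeniusNormedAddCommGroup Matrix.frobeniusNormedSpace

/-- The Frobenius norm of a matrix. -/
noncomputable def frobNorm {α β : Type*} [Fintype α] [Fintype β] (A : Matrix α β ℝ) : ℝ :=
  Real.sqrt (frobInner A A)

/-- The spectral norm of a matrix. -/
noncomputable def specNorm {m r : ℕ} (V : Matrix (Fin m) (Fin r) ℝ) : ℝ :=
  ‖LinearMap.toContinuousLinearMap (Matrix.toEuclideanLin V)‖

/-!
The map `W ↦ f (W * Vᵀ)` differs from its linearization at `Ũ`, `W ↦ ⟨∇f(ŨVᵀ)V, W - Ũ⟩`,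
by at most `(Lf / 2) ‖(W - Ũ)Vᵀ‖_F² ≤ (τ / 2) ‖W - Ũ‖_F²`, by the descent lemma for the
Lipschitz gradient and `‖(W - Ũ)Vᵀ‖_F ≤ ‖W - Ũ‖_F ‖V‖`. Adding the upper bound at `U⁺`, the
lower bound at `U` and the minimality of `U⁺` against `U` gives the inequality.
-/

section Frobenius

variable {α β : Type*} [Fintype α] [Fintype β]

theorem frobenius_norm_sq_eq_sum_rows (A : Matrix α β ℝ) :
    ‖A‖ ^ 2 = ∑ i, ‖WithLp.toLp 2 (A i)‖ ^ 2 :=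
  PiLp.norm_sq_eq_of_L2 _ (WithLp.toLp 2 fun i => WithLp.toLp 2 (A i))

theorem frobInner_self_eq_norm_sq (A : Matrix α β ℝ) : frobInner A A = ‖A‖ ^ 2 := by
  rw [frobenius_norm_sq_eq_sum_rows]
  refine Finset.sum_congr rfl fun i _ => ?_
  rw [EuclideanSpace.norm_sq_eq]
  simp [sq]

theorem frobNorm_eq_norm (A : Matrix α β ℝ) : frobNorm A = ‖A‖ := by
  rw [frobNorm, frobInner_self_eq_norm_sq, Real.sqrt_sq (norm_nonneg A)]

theorem frobInner_sub_left (A B C : Matrix α β ℝ) :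
    frobInner (A - B) C = frobInner A C - frobInner B C := by
  simp [frobInner, sub_mul]

theorem frobInner_sub_right (A B C : Matrix α β ℝ) :
    frobInner A (B - C) = frobInner A B - frobInner A C := by
  simp [frobInner, mul_sub]

theorem abs_frobInner_le (A B : Matrix α β ℝ) : |frobInner A B| ≤ ‖A‖ * ‖B‖ := by
  have h : frobInner A B ^ 2 ≤ frobInner A A * frobInner B B := by
    simpa [frobInner, Fintype.sum_prod_type, pow_two] using
      Finset.sum_mul_sq_le_sq_mul_sq Finset.univ (fun p : α × β => A p.1 p.2) fun p => B p.1 p.2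
  rw [frobInner_self_eq_norm_sq, frobInner_self_eq_norm_sq, ← mul_pow] at h
  exact abs_le_of_sq_le_sq h (by positivity)

theorem frobInner_mul_transpose_right {γ : Type*} [Fintype γ] (M : Matrix α β ℝ) (W : Matrix α γ ℝ)
    (V : Matrix β γ ℝ) : frobInner M (W * Vᵀ) = frobInner (M * V) W := by
  simp only [frobInner, Matrix.mul_apply, Matrix.transpose_apply, Finset.mul_sum, Finset.sum_mul]
  refine Finset.sum_congr rfl fun i _ => ?_
  rw [Finset.sum_comm]
  exact Finset.sum_congr rfl fun k _ => Finset.sum_congr rfl fun j _ => by ring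

end Frobenius

theorem norm_toLp_mulVec_le {m r : ℕ} (V : Matrix (Fin m) (Fin r) ℝ) (x : Fin r → ℝ) :
    ‖WithLp.toLp 2 (V *ᵥ x)‖ ≤ specNorm V * ‖WithLp.toLp 2 x‖ := by
  simpa [specNorm] using
    (LinearMap.toContinuousLinearMap (Matrix.toEuclideanLin V)).le_opNorm (WithLp.toLp 2 x)

theorem norm_mul_transpose_le {α : Type*} [Fintype α] {m r : ℕ} (A : Matrix α (Fin r) ℝ)
    (V : Matrix (Fin m) (Fin r) ℝ) : ‖A * Vᵀ‖ ≤ ‖A‖ * specNorm V := by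
  have hrows : ‖A * Vᵀ‖ ^ 2 ≤ (‖A‖ * specNorm V) ^ 2 := by
    rw [mul_pow, frobenius_norm_sq_eq_sum_rows, frobenius_norm_sq_eq_sum_rows, Finset.sum_mul]
    refine Finset.sum_le_sum fun i _ => ?_
    rw [Matrix.mul_apply_eq_vecMul, Matrix.vecMul_transpose, ← mul_pow, mul_comm]
    exact pow_le_pow_left₀ (norm_nonneg _) (norm_toLp_mulVec_le V (A i)) 2
  exact le_of_sq_le_sq hrows (mul_nonneg (norm_nonneg _) (norm_nonneg _))

theorem abs_sub_sub_le_of_abs_deriv_sub_le {φ φ' : ℝ → ℝ} {K : ℝ}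
    (hφ : ∀ t, HasDerivAt φ (φ' t) t) (hK : ∀ t ∈ Set.Ico (0 : ℝ) 1, |φ' t - φ' 0| ≤ K * t) :
    |φ 1 - φ 0 - φ' 0| ≤ K / 2 := by
  set g : ℝ → ℝ := fun t => φ t - φ 0 - t * φ' 0
  have hg : ∀ t, HasDerivAt g (φ' t - φ' 0) t := fun t =>
    ((hφ t).sub_const (φ 0)).sub (hasDerivAt_mul_const (φ' 0))
  have hB : ∀ t, HasDerivAt (fun t : ℝ => K / 2 * t ^ 2) (K * t) t :=
    fun t => ((hasDerivAt_pow 2 t).const_mul _).congr_deriv (by push_cast; ring)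
  calc |φ 1 - φ 0 - φ' 0| = ‖g 1‖ := by simp [g]
    _ ≤ K / 2 * 1 ^ 2 := image_norm_le_of_norm_deriv_right_le_deriv_boundary
        (fun t _ => (hg t).continuousAt.continuousWithinAt) (fun t _ => (hg t).hasDerivWithinAt)
        (by simp [g]) hB hK (Set.right_mem_Icc.mpr zero_le_one)
    _ = K / 2 := by ring

theorem abs_sub_sub_frobInner_le {α β : Type*} [Fintype α] [Fintype β]
    {f : Matrix α β ℝ → ℝ} {f' : Matrix α β ℝ → Matrix α β ℝ} {L : ℝ}
    (hdiff : Differentiable ℝ f) (hgrad : ∀ X H, fderiv ℝ f X H = frobInner (f' X) H)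
    (hlip : ∀ X Y, ‖f' X - f' Y‖ ≤ L * ‖X - Y‖) (X Y : Matrix α β ℝ) :
    |f Y - f X - frobInner (f' X) (Y - X)| ≤ L / 2 * ‖Y - X‖ ^ 2 := by
  set D := Y - X
  have hline : ∀ t : ℝ,
      HasDerivAt (fun t : ℝ => f (X + t • D)) (frobInner (f' (X + t • D)) D) t := by
    intro t
    rw [← hgrad]
    refine (hdiff _).hasFDerivAt.comp_hasDerivAt t ?_
    simpa using ((hasDerivAt_id t).smul_const D).const_add X
  have hK : ∀ t ∈ Set.Ico (0 : ℝ) 1,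
      |frobInner (f' (X + t • D)) D - frobInner (f' (X + (0 : ℝ) • D)) D| ≤ L * ‖D‖ ^ 2 * t := by
    rintro t ⟨ht, -⟩
    calc _ = |frobInner (f' (X + t • D) - f' X) D| := by simp [frobInner_sub_left]
      _ ≤ ‖f' (X + t • D) - f' X‖ * ‖D‖ := abs_frobInner_le _ _
      _ ≤ L * ‖t • D‖ * ‖D‖ := by
          gcongr
          simpa using hlip (X + t • D) X
      _ = L * ‖D‖ ^ 2 * t := by rw [norm_smul, Real.norm_of_nonneg ht]; ring
  have := abs_sub_sub_le_of_abs_deriv_sub_le hline hK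
  simp only [zero_smul, add_zero, one_smul, D, add_sub_cancel] at this
  exact this.trans_eq (by ring)

theorem nonneg_of_forall_norm_sub_le {E F : Type*} [NormedAddCommGroup E] [Nontrivial E]
    [SeminormedAddCommGroup F] {g : E → F} {L : ℝ} (h : ∀ x y, ‖g x - g y‖ ≤ L * ‖x - y‖) :
    0 ≤ L := by
  obtain ⟨x, hx⟩ := exists_ne (0 : E)
  have := (norm_nonneg _).trans (h x 0)
  rw [sub_zero] at this
  exact nonneg_of_mul_nonneg_left this (norm_pos_iff.mpr hx)

theorem abs_sub_sub_frobInner_mul_transpose_le {α : Type*} [Fintype α] {m r : ℕ}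
    {f : Matrix α (Fin m) ℝ → ℝ} {f' : Matrix α (Fin m) ℝ → Matrix α (Fin m) ℝ} {L : ℝ}
    (hdiff : Differentiable ℝ f) (hgrad : ∀ X H, fderiv ℝ f X H = frobInner (f' X) H)
    (hlip : ∀ X Y, ‖f' X - f' Y‖ ≤ L * ‖X - Y‖)
    (V : Matrix (Fin m) (Fin r) ℝ) (W U : Matrix α (Fin r) ℝ) :
    |f (U * Vᵀ) - f (W * Vᵀ) - frobInner (f' (W * Vᵀ) * V) (U - W)| ≤
      L * specNorm V ^ 2 / 2 * ‖U - W‖ ^ 2 := by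
  -- `hlip` forces `0 ≤ L` only when `Matrix α (Fin m) ℝ` is nontrivial.
  rcases isEmpty_or_nonempty α with hα | hα
  · simp [Subsingleton.elim U W, frobInner]
  rcases isEmpty_or_nonempty (Fin m) with hm | hm
  · simp [Subsingleton.elim V 0, specNorm, frobInner]
  have hL : 0 ≤ L := nonneg_of_forall_norm_sub_le hlip
  have hdescent := abs_sub_sub_frobInner_le hdiff hgrad hlip (W * Vᵀ) (U * Vᵀ)
  rw [← Matrix.sub_mul, frobInner_mul_transpose_right] at hdescent
  calc _ ≤ L / 2 * ‖(U - W) * Vᵀ‖ ^ 2 := hdescent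
    _ ≤ L / 2 * (‖U - W‖ * specNorm V) ^ 2 := by
        gcongr
        exact norm_mul_transpose_le _ _
    _ = L * specNorm V ^ 2 / 2 * ‖U - W‖ ^ 2 := by ring

theorem one_block_majorization_descent_general {n m r : ℕ}
    (f : Matrix (Fin n) (Fin m) ℝ → ℝ) (f' : Matrix (Fin n) (Fin m) ℝ → Matrix (Fin n) (Fin m) ℝ)
    (Lf : ℝ)
    (hdiff : Differentiable ℝ f)
    (hgrad : ∀ X H, fderiv ℝ f X H = frobInner (f' X) H)
    (hlip : ∀ X Y, frobNorm (f' X - f' Y) ≤ Lf * frobNorm (X - Y))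
    (lam mu : ℝ)
    (V : Matrix (Fin m) (Fin r) ℝ) (τ : ℝ) (hτ : τ = Lf * specNorm V ^ 2)
    (Ut : Matrix (Fin n) (Fin r) ℝ) (γ : ℝ)
    (Uplus : Matrix (Fin n) (Fin r) ℝ)
    (hmin : ∀ U : Matrix (Fin n) (Fin r) ℝ,
      frobInner (f' (Ut * Vᵀ) * V) Uplus + γ / 2 * frobInner (Uplus - Ut) (Uplus - Ut) +
          mu / 2 * frobInner Uplus Uplus + lam * (l20 Uplus : ℝ) ≤
        frobInner (f' (Ut * Vᵀ) * V) U + γ / 2 * frobInner (U - Ut) (U - Ut) +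
          mu / 2 * frobInner U U + lam * (l20 U : ℝ)) :
    ∀ U : Matrix (Fin n) (Fin r) ℝ,
      f (Uplus * Vᵀ) + mu / 2 * frobInner Uplus Uplus + lam * (l20 Uplus : ℝ) +
          (γ - τ) / 2 * frobInner (Uplus - Ut) (Uplus - Ut) ≤
        f (U * Vᵀ) + mu / 2 * frobInner U U + lam * (l20 U : ℝ) +
          (γ + τ) / 2 * frobInner (U - Ut) (U - Ut) := by
  intro U
  simp only [frobNorm_eq_norm] at hlip
  have hUplus := abs_le.mp (abs_sub_sub_frobInner_mul_transpose_le hdiff hgrad hlip V Ut Uplus)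
  have hU := abs_le.mp (abs_sub_sub_frobInner_mul_transpose_le hdiff hgrad hlip V Ut U)
  rw [frobInner_sub_right] at hUplus hU
  simp only [frobInner_self_eq_norm_sq] at hmin ⊢
  subst hτ
  linarith [hmin U, hUplus.2, hU.1]

/-- one-block descent property of the majorized proximal step for the
column `ℓ_{2,0}`-regularized factorization model. -/
theorem one_block_majorization_descent {n m r : ℕ}
    (f : Matrix (Fin n) (Fin m) ℝ → ℝ) (f' : Matrix (Fin n) (Fin m) ℝ → Matrix (Fin n) (Fin m) ℝ)
    (Lf : ℝ)
    (hdiff : Differentiable ℝ f)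
    (hgrad : ∀ X H, fderiv ℝ f X H = frobInner (f' X) H)
    (hlip : ∀ X Y, frobNorm (f' X - f' Y) ≤ Lf * frobNorm (X - Y))
    (lam mu : ℝ) (hlam : 0 < lam) (hmu : 0 ≤ mu)
    (V : Matrix (Fin m) (Fin r) ℝ) (τ : ℝ) (hτ : τ = Lf * specNorm V ^ 2)
    (Ut : Matrix (Fin n) (Fin r) ℝ) (γ : ℝ) (hγ : γ > τ)
    (Uplus : Matrix (Fin n) (Fin r) ℝ)
    (hmin : ∀ U : Matrix (Fin n) (Fin r) ℝ,
      frobInner (f' (Ut * Vᵀ) * V) Uplus + γ / 2 * frobInner (Uplus - Ut) (Uplus - Ut) +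
          mu / 2 * frobInner Uplus Uplus + lam * (l20 Uplus : ℝ) ≤
        frobInner (f' (Ut * Vᵀ) * V) U + γ / 2 * frobInner (U - Ut) (U - Ut) +
          mu / 2 * frobInner U U + lam * (l20 U : ℝ)) :
    ∀ U : Matrix (Fin n) (Fin r) ℝ,
      f (Uplus * Vᵀ) + mu / 2 * frobInner Uplus Uplus + lam * (l20 Uplus : ℝ) +
          (γ - τ) / 2 * frobInner (Uplus - Ut) (Uplus - Ut) ≤
        f (U * Vᵀ) + mu / 2 * frobInner U U + lam * (l20 U : ℝ) +
          (γ + τ) / 2 * frobInner (U - Ut) (U - Ut) :=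
  one_block_majorization_descent_general f f' Lf hdiff hgrad hlip lam mu V τ hτ Ut γ Uplus hmin
end
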